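/- Let G be a graph and H ⊆ G a subgraph of finite adhesion. Then every rooted tree T ⊆ G that contains V(H) cofinally has finite adhesion in G. -/

import Mathlib

open SimpleGraph

universe u v w

/-- `D` is (the vertex set of) a connected component of the induced subgraph of `G` on `A`. -/
def IsCompOf {V : Type u} (G : SimpleGraph V) (A D : Set V) : Prop :=
  D ⊆ A ∧ (G.induce D).Connected ∧
  ∀ D' : Set V, D ⊆ D' → D' ⊆ A → (G.induce D').Connected → D' = D

/-- The neighbourhood `N(D)` of a set `D`: all vertices outside `D` with a neighbour in `D`. -/
def nbrSet {V : Type u} (G : SimpleGraph V) (D : Set V) : Set V :=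
  {v : V | v ∉ D ∧ ∃ d ∈ D, G.Adj v d}

/-- The (induced) subgraph of `G` on the vertex set `S` has finite adhesion in `G`:
all components `D` of `G − S` have finite neighbourhood `N(D)`. -/
def FiniteAdhesion {V : Type u} (G : SimpleGraph V) (S : Set V) : Prop :=
  ∀ D : Set V, IsCompOf G Sᶜ D → (nbrSet G D).Finite


/-- A rooted tree inside the graph `G`. -/
structure RootedTreeIn {V : Type u} (G : SimpleGraph V) where
  sub : G.Subgraph
  root : V
  root_mem : root ∈ sub.verts
  isTree : sub.coe.IsTree

/-- The tree-order of a rooted tree in `G`: `x ≤ y` iff both lie in the tree and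
`x` lies on every path of the tree from the root to `y`. -/
def RootedTreeIn.le {V : Type u} {G : SimpleGraph V} (R : RootedTreeIn G) (x y : V) : Prop :=
  ∃ (hx : x ∈ R.sub.verts) (hy : y ∈ R.sub.verts),
    ∀ p : R.sub.coe.Walk ⟨R.root, R.root_mem⟩ ⟨y, hy⟩, p.IsPath →
      (⟨x, hx⟩ : R.sub.verts) ∈ p.support

/-- A rooted tree in `G` is normal if the endvertices of every `T`-path of `G`
(a path with endvertices in the tree, but all edges and inner vertices outside it)
are comparable in its tree-order. -/
def RootedTreeIn.IsNormalIn {V : Type u} {G : SimpleGraph V} (R : RootedTreeIn G) : Prop :=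
  ∀ ⦃x y : V⦄ (p : G.Walk x y), p.IsPath →
    x ∈ R.sub.verts → y ∈ R.sub.verts →
    (∀ v ∈ p.support, v ≠ x → v ≠ y → v ∉ R.sub.verts) →
    (∀ e ∈ p.edges, e ∉ R.sub.edgeSet) →
    (R.le x y ∨ R.le y x)

/-- The rooted tree `R` contains the vertex set `U` cofinally. -/
def RootedTreeIn.ContainsCofinally {V : Type u} {G : SimpleGraph V} (R : RootedTreeIn G)
    (U : Set V) : Prop :=
  U ⊆ R.sub.verts ∧ ∀ x ∈ R.sub.verts, ∃ u ∈ U, R.le x u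

/-- `X` separates `A` from `B` in `G`: every walk from `A` to `B` meets `X`. -/
def Separates {V : Type u} (G : SimpleGraph V) (X A B : Set V) : Prop :=
  ∀ ⦃a b : V⦄, a ∈ A → b ∈ B → ∀ p : G.Walk a b, ∃ v ∈ p.support, v ∈ X

/-- `U` is dispersed in `G`: every ray of `G` can be separated from `U`
by a finite set of vertices. -/
def Dispersed {V : Type u} (G : SimpleGraph V) (U : Set V) : Prop :=
  ∀ f : ℕ → V, Function.Injective f → (∀ n, G.Adj (f n) (f (n + 1))) →
    ∃ X : Set V, X.Finite ∧ Separates G X U (Set.range f)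

/-!
Let `D` be a component of `G - T`. Since `V(H) ⊆ V(T)`, `D` lies in a component `D'` of `G - H`,
whose neighbourhood is finite. A neighbour `t ∈ T` of `D` either lies in `N(D')`, or it lies in
`D'`; then the tree path from `t` up to a vertex of `H` above it must leave `D'`, and it does so
through a vertex of `N(D')` above `t`. Hence `N(D)` lies in the down-closure of the finite set
`N(D')`, which is finite because every down-set `⌈m⌉` of a tree is a finite path.
-/

namespace SimpleGraph.Walk

variable {V : Type*} {G : SimpleGraph V}

theorem exists_eq_append_cons_of_mem_of_notMem {S : Set V} {a b : V} (w : G.Walk a b)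
    (ha : a ∈ S) (hb : b ∉ S) :
    ∃ (x n : V) (h : G.Adj x n) (p : G.Walk a x) (q : G.Walk n b),
      x ∈ S ∧ n ∉ S ∧ w = p.append (cons h q) := by
  induction w with
  | nil => exact absurd ha hb
  | @cons a c b h w ih =>
    by_cases hc : c ∈ S
    · obtain ⟨x, n, h', p, q, hx, hn, rfl⟩ := ih hc hb
      exact ⟨x, n, h', cons h p, q, hx, hn, rfl⟩
    · exact ⟨a, c, h, nil, w, ha, hc, rfl⟩

end SimpleGraph.Walk

section Components

variable {V : Type u} {G : SimpleGraph V} {A B D : Set V}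

theorem IsCompOf.nbrSet_subset_compl (hD : IsCompOf G A D) : nbrSet G D ⊆ Aᶜ := by
  rintro v ⟨hvD, d, hd, hvd⟩ hvA
  have hconn : (G.induce (D ∪ {v})).Connected :=
    connected_induce_union hD.2.1.preconnected Preconnected.of_subsingleton hd rfl
      hvd.symm
  have hDv := hD.2.2 (D ∪ {v}) Set.subset_union_left (Set.union_subset hD.1 (by simpa)) hconn
  exact hvD (hDv ▸ Set.mem_union_right D rfl)

/-- `D'` is the union of all connected subsets of `B` containing `D`. -/
theorem exists_isCompOf_superset (hD : (G.induce D).Connected) (hDB : D ⊆ B) :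
    ∃ D', IsCompOf G B D' ∧ D ⊆ D' := by
  set S := {s : Set V | D ⊆ s ∧ s ⊆ B ∧ (G.induce s).Connected}
  have hDS : D ∈ S := ⟨le_rfl, hDB, hD⟩
  obtain ⟨⟨d, hd⟩⟩ := hD.nonempty
  have hconn : (G.induce (⋃₀ S)).Connected :=
    induce_sUnion_connected_of_pairwise_not_disjoint ⟨D, hDS⟩
      (fun hs ht => ⟨d, hs.1 hd, ht.1 hd⟩) (fun hs => hs.2.2)
  refine ⟨⋃₀ S, ⟨Set.sUnion_subset fun s hs => hs.2.1, hconn, ?_⟩, Set.subset_sUnion_of_mem hDS⟩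
  intro D' hD' hD'B hD'conn
  have hD'S : D' ∈ S := ⟨(Set.subset_sUnion_of_mem hDS).trans hD', hD'B, hD'conn⟩
  exact (Set.subset_sUnion_of_mem hD'S).antisymm hD'

end Components

namespace RootedTreeIn

variable {V : Type u} {G : SimpleGraph V} (R : RootedTreeIn G)

theorem le_of_mem_support {y : R.sub.verts} {P : R.sub.coe.Walk ⟨R.root, R.root_mem⟩ y}
    (hP : P.IsPath) {x : R.sub.verts} (hx : x ∈ P.support) : R.le x y := by
  refine ⟨x.2, y.2, fun p hp => ?_⟩
  obtain rfl : p = P := congrArg Subtype.val <|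
    (R.isTree.isAcyclic.subsingleton_path _ _).elim ⟨p, hp⟩ ⟨P, hP⟩
  exact hx

theorem le_refl_of_mem {x : V} (hx : x ∈ R.sub.verts) : R.le x x :=
  have ⟨_, hP, _⟩ := R.isTree.existsUnique_path ⟨R.root, R.root_mem⟩ ⟨x, hx⟩
  R.le_of_mem_support hP (Walk.end_mem_support _)

theorem finite_setOf_le (y : V) : {x | R.le x y}.Finite := by
  by_cases hy : y ∈ R.sub.verts
  · obtain ⟨P, hP, -⟩ := R.isTree.existsUnique_path ⟨R.root, R.root_mem⟩ ⟨y, hy⟩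
    refine (P.support.map Subtype.val).finite_toSet.subset ?_
    rintro x ⟨hx, _, hxP⟩
    exact List.mem_map.mpr ⟨⟨x, hx⟩, hxP P hP, rfl⟩
  · exact Set.finite_empty.subset fun x ⟨_, hy', _⟩ => hy hy'

theorem exists_le_mem_nbrSet {S : Set V} {t u : V} (htu : R.le t u) (ht : t ∈ S) (hu : u ∉ S) :
    ∃ n ∈ nbrSet G S, R.le t n := by
  obtain ⟨htT, huT, hall⟩ := htu
  obtain ⟨P, hP, -⟩ := R.isTree.existsUnique_path ⟨R.root, R.root_mem⟩ ⟨u, huT⟩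
  obtain ⟨q, r, rfl⟩ := Walk.mem_support_iff_exists_append.mp (hall P hP)
  obtain ⟨x, n, h, p, q', hx, hn, rfl⟩ :=
    r.exists_eq_append_cons_of_mem_of_notMem (S := Subtype.val ⁻¹' S) ht hu
  rw [← Walk.concat_append, Walk.append_assoc] at hP
  have htn : R.le t n := R.le_of_mem_support hP.of_append_left
    (Walk.support_subset_support_append_left _ _ q.end_mem_support)
  exact ⟨n, ⟨hn, x, hx, (Subgraph.coe_adj_sub _ _ _ h).symm⟩, htn⟩

end RootedTreeIn

/-- Every rooted tree containing the vertex set of a subgraph of finite adhesion cofinally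
has itself finite adhesion. -/
theorem stmt12 {V : Type u} (G : SimpleGraph V) (H : G.Subgraph)
    (hH : FiniteAdhesion G H.verts)
    (R : RootedTreeIn G) (hcof : R.ContainsCofinally H.verts) :
    FiniteAdhesion G R.sub.verts := by
  intro D hD
  obtain ⟨D', hD', hDD'⟩ :=
    exists_isCompOf_superset hD.2.1 (hD.1.trans (Set.compl_subset_compl.mpr hcof.1))
  refine ((hH D' hD').biUnion fun m _ => R.finite_setOf_le m).subset fun t ht => ?_
  have htT : t ∈ R.sub.verts := by simpa using hD.nbrSet_subset_compl ht
  obtain ⟨u, huH, htu⟩ := hcof.2 t htT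
  by_cases htD' : t ∈ D'
  · obtain ⟨n, hn, htn⟩ := R.exists_le_mem_nbrSet htu htD' fun hu => hD'.1 hu huH
    exact Set.mem_biUnion hn htn
  · obtain ⟨-, d, hd, htd⟩ := ht
    exact Set.mem_biUnion ⟨htD', d, hDD' hd, htd⟩ (R.le_refl_of_mem htT)
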